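/- For probability distributions ρ, σ, τ on a finite set, −log₂ F²(ρ,σ) ≤ D(τ‖ρ) + D(τ‖σ), where F(ρ,σ) = ∑_x √(ρ(x)σ(x)) is the (classical) fidelity and D denotes base-2 relative entropy. -/

import Mathlib

/-!
Writing `q = √(ρσ)`, the two relative entropies add up pointwise to `2 ∑ τ log (τ / q)`, and by
Jensen's inequality for the concave logarithm, `∑ τ log (q / τ) ≤ log ∑ q ≤ log F(ρ,σ)`.
-/

/-- `p` is a probability distribution on the finite set `X`. -/
def IsProb {X : Type*} [Fintype X] (p : X → ℝ) : Prop :=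
  (∀ x, 0 ≤ p x) ∧ ∑ x, p x = 1

/-- Base-2 relative entropy with values in `EReal`, equal to `+∞` when `t` is not absolutely
continuous with respect to `p`. -/
noncomputable def DklE {X : Type*} [Fintype X] (t p : X → ℝ) : EReal :=
  if ∀ x, p x = 0 → t x = 0 then ((∑ x, t x * Real.logb 2 (t x / p x) : ℝ) : EReal) else ⊤

open Finset Real

theorem DklE_ne_bot {X : Type*} [Fintype X] (t p : X → ℝ) : DklE t p ≠ ⊥ := by
  unfold DklE; split <;> simp

theorem neg_log_sum_le_sum_mul_log_div {ι : Type*} (s : Finset ι) {t q : ι → ℝ}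
    (ht : ∀ i ∈ s, 0 ≤ t i) (ht1 : ∑ i ∈ s, t i = 1) (hq : ∀ i ∈ s, 0 ≤ q i)
    (hqt : ∀ i ∈ s, q i = 0 → t i = 0) :
    -log (∑ i ∈ s, q i) ≤ ∑ i ∈ s, t i * log (t i / q i) := by
  set s' := s.filter (fun i ↦ t i ≠ 0)
  have hpos : ∀ i ∈ s', 0 < t i ∧ 0 < q i := by
    intro i hi
    obtain ⟨hi, hti⟩ := mem_filter.mp hi
    exact ⟨(ht i hi).lt_of_ne' hti, (hq i hi).lt_of_ne' fun h ↦ hti (hqt i hi h)⟩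
  have ht1' : ∑ i ∈ s', t i = 1 := by rw [sum_filter_ne_zero, ht1]
  have hs' : s'.Nonempty := nonempty_of_sum_ne_zero (by rw [ht1']; exact one_ne_zero)
  have jensen : ∑ i ∈ s', t i * log (q i / t i) ≤ log (∑ i ∈ s', q i) := by
    have := strictConcaveOn_log_Ioi.concaveOn.le_map_sum (t := s') (p := fun i ↦ q i / t i)
      (fun i hi ↦ (hpos i hi).1.le) ht1' fun i hi ↦ div_pos (hpos i hi).2 (hpos i hi).1
    simp only [smul_eq_mul] at this
    rwa [sum_congr rfl fun i hi ↦ mul_div_cancel₀ (q i) (hpos i hi).1.ne'] at this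
  have hmono : log (∑ i ∈ s', q i) ≤ log (∑ i ∈ s, q i) :=
    log_le_log (sum_pos (fun i hi ↦ (hpos i hi).2) hs')
      (sum_le_sum_of_subset_of_nonneg (filter_subset _ _) fun i hi _ ↦ hq i hi)
  calc -log (∑ i ∈ s, q i) ≤ -∑ i ∈ s', t i * log (q i / t i) := by linarith
    _ = ∑ i ∈ s', t i * log (t i / q i) := by
      rw [← sum_neg_distrib]
      exact sum_congr rfl fun i _ ↦ by rw [← inv_div, log_inv, mul_neg, neg_neg]
    _ = ∑ i ∈ s, t i * log (t i / q i) :=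
      sum_filter_of_ne fun i _ h ↦ left_ne_zero_of_mul h

theorem mul_log_div_add_mul_log_div {r s t : ℝ} (hr : 0 ≤ r) (hs : 0 ≤ s)
    (hrt : r = 0 → t = 0) (hst : s = 0 → t = 0) :
    t * log (t / r) + t * log (t / s) = 2 * (t * log (t / √(r * s))) := by
  rcases eq_or_ne t 0 with rfl | ht
  · simp
  have hr' : r ≠ 0 := fun h ↦ ht (hrt h)
  have hs' : s ≠ 0 := fun h ↦ ht (hst h)
  rw [log_div ht hr', log_div ht hs', log_div ht (sqrt_ne_zero'.mpr (by positivity)),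
    log_sqrt (mul_nonneg hr hs), log_mul hr' hs']
  ring

theorem neg_log_sq_sum_sqrt_mul_le {ι : Type*} (s : Finset ι) {ρ σ τ : ι → ℝ}
    (hρ : ∀ i ∈ s, 0 ≤ ρ i) (hσ : ∀ i ∈ s, 0 ≤ σ i) (hτ : ∀ i ∈ s, 0 ≤ τ i)
    (hτ1 : ∑ i ∈ s, τ i = 1) (hρτ : ∀ i ∈ s, ρ i = 0 → τ i = 0)
    (hστ : ∀ i ∈ s, σ i = 0 → τ i = 0) :
    -log ((∑ i ∈ s, √(ρ i * σ i)) ^ 2) ≤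
      ∑ i ∈ s, τ i * log (τ i / ρ i) + ∑ i ∈ s, τ i * log (τ i / σ i) := by
  have hqτ : ∀ i ∈ s, √(ρ i * σ i) = 0 → τ i = 0 := fun i hi h ↦ by
    rcases mul_eq_zero.mp (sqrt_eq_zero (mul_nonneg (hρ i hi) (hσ i hi)) |>.mp h) with h | h
    exacts [hρτ i hi h, hστ i hi h]
  have gibbs := neg_log_sum_le_sum_mul_log_div s hτ hτ1 (fun i _ ↦ sqrt_nonneg _) hqτ
  rw [← sum_add_distrib, sum_congr rfl fun i hi ↦ mul_log_div_add_mul_log_div (hρ i hi) (hσ i hi)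
    (hρτ i hi) (hστ i hi), ← mul_sum, log_pow]
  push_cast
  linarith

/-- For probability distributions `ρ, σ, τ` on a finite set:
`-log₂ F²(ρ,σ) ≤ D(τ‖ρ) + D(τ‖σ)`, where `F(ρ,σ) = ∑ₓ √(ρ(x)σ(x))`. -/
theorem fidelity_vs_relative_entropy {X : Type*} [Fintype X] (ρ σ τ : X → ℝ)
    (hρ : IsProb ρ) (hσ : IsProb σ) (hτ : IsProb τ) :
    ((-Real.logb 2 ((∑ x, Real.sqrt (ρ x * σ x)) ^ 2) : ℝ) : EReal) ≤
      DklE τ ρ + DklE τ σ := by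
  by_cases hρτ : ∀ x, ρ x = 0 → τ x = 0
  swap
  · rw [DklE, if_neg hρτ, EReal.top_add_of_ne_bot (DklE_ne_bot τ σ)]
    exact le_top
  by_cases hστ : ∀ x, σ x = 0 → τ x = 0
  swap
  · rw [show DklE τ σ = ⊤ from if_neg hστ, EReal.add_top_of_ne_bot (DklE_ne_bot τ ρ)]
    exact le_top
  rw [DklE, DklE, if_pos hρτ, if_pos hστ, ← EReal.coe_add, EReal.coe_le_coe_iff]
  have key := neg_log_sq_sum_sqrt_mul_le univ (fun x _ ↦ hρ.1 x) (fun x _ ↦ hσ.1 x)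
    (fun x _ ↦ hτ.1 x) hτ.2 (fun x _ ↦ hρτ x) (fun x _ ↦ hστ x)
  simp only [logb, mul_div_assoc', ← sum_div, ← neg_div, ← add_div]
  exact div_le_div_of_nonneg_right key (log_pos one_lt_two).le
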